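/- arXiv:1007.3584 — 4 statements merged into one kernel-verified Lean document; each statement's English description precedes it below -/
import Mathlib

section
/- Let ρ be a density matrix and M a Hermitian positive semidefinite matrix with non-degenerate spectrum (all eigenvalues distinct). If tr(M²ρ) = (tr(Mρ))², then ρ is a rank-one projector onto an eigenvector of M, i.e., ρ = |m⟩⟨m| for some eigenvector |m⟩ of M. -/
/-!
Diagonalise `M = U D U*` and put `σ = U* ρ U`. The diagonal `p i = σ i i` of `σ` is a probability
vector, and `tr (M ^ k ρ) = ∑ i, p i * λ i ^ k`, so the hypothesis says that the eigenvalues have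
zero variance under `p`. As they are distinct, `p` is a point mass at some `j`. A positive
semidefinite matrix vanishes on the rows and columns of its zero diagonal entries, so
`σ = e_j e_jᴴ`, and hence `ρ = u_j u_jᴴ` for the `j`-th eigenvector `u_j = U e_j`.
-/

open scoped ComplexOrder
open Matrix

theorem sum_mul_sub_sum_mul_sq {ι : Type*} [Fintype ι] {p a : ι → ℝ} (hp : ∑ i, p i = 1) :
    ∑ i, p i * (a i - ∑ k, p k * a k) ^ 2 = ∑ i, p i * a i ^ 2 - (∑ i, p i * a i) ^ 2 := by
  set m := ∑ k, p k * a k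
  have expand (i : ι) :
      p i * (a i - m) ^ 2 = p i * a i ^ 2 - 2 * m * (p i * a i) + m ^ 2 * p i := by
    ring
  simp only [expand, Finset.sum_add_distrib, Finset.sum_sub_distrib, ← Finset.mul_sum, hp]
  ring

theorem exists_eq_single_of_sum_mul_sq_eq_sq {ι : Type*} [Fintype ι] [DecidableEq ι]
    {p a : ι → ℝ} (hp₀ : 0 ≤ p) (hp₁ : ∑ i, p i = 1) (ha : Function.Injective a)
    (h : ∑ i, p i * a i ^ 2 = (∑ i, p i * a i) ^ 2) : ∃ j, p = Pi.single j 1 := by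
  set m := ∑ k, p k * a k
  have hvar : ∑ i, p i * (a i - m) ^ 2 = 0 := by rw [sum_mul_sub_sum_mul_sq hp₁, h, sub_self]
  have hmean (i : ι) (hi : p i ≠ 0) : a i = m := by
    have := (Finset.sum_eq_zero_iff_of_nonneg fun i _ => mul_nonneg (hp₀ i) (sq_nonneg _)).1
      hvar i (Finset.mem_univ i)
    simpa [hi, sub_eq_zero] using this
  obtain ⟨j, -, hj⟩ := Finset.exists_ne_zero_of_sum_ne_zero (hp₁.symm ▸ one_ne_zero)
  have hsupp (i : ι) (hij : i ≠ j) : p i = 0 := by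
    by_contra hi
    exact hij (ha ((hmean i hi).trans (hmean j hj).symm))
  have hpj : p j = 1 := by rwa [Finset.sum_eq_single j (fun i _ => hsupp i) (by simp)] at hp₁
  refine ⟨j, funext fun i => ?_⟩
  rcases eq_or_ne i j with rfl | hij
  · simp [hpj]
  · simp [hsupp i hij, hij]

namespace Matrix

theorem mul_vecMulVec_single_mul_star {n α : Type*} [Fintype n] [DecidableEq n] [Semiring α]
    [StarRing α] (U : Matrix n n α) (j : n) :
    U * vecMulVec (Pi.single j 1) (Pi.single j 1) * star U =
      vecMulVec (U.col j) (star (U.col j)) := by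
  rw [mul_vecMulVec, vecMulVec_mul, mulVec_single_one, single_one_vecMul]
  congr 1

variable {n 𝕜 : Type*} [Fintype n] [DecidableEq n] [RCLike 𝕜]

theorem PosSemidef.col_eq_zero_of_diag_eq_zero {A : Matrix n n 𝕜} (hA : A.PosSemidef) {i : n}
    (hi : A i i = 0) : A.col i = 0 := by
  rw [← mulVec_single_one]
  exact (hA.dotProduct_mulVec_zero_iff _).1 (by simpa using hi)

theorem PosSemidef.eq_vecMulVec_single_of_re_diag_eq {A : Matrix n n 𝕜} (hA : A.PosSemidef)
    {j : n} (h : (fun i => RCLike.re (A i i)) = Pi.single j 1) :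
    A = vecMulVec (Pi.single j 1) (Pi.single j 1) := by
  have hdiag (i : n) : A i i = (Pi.single j 1 : n → 𝕜) i := by
    have hre : (RCLike.re (A i i) : 𝕜) = A i i := congrFun hA.1.coe_re_diag i
    rw [← hre, congrFun h i]
    rcases eq_or_ne i j with rfl | hij <;> simp [*]
  have hcol (l : n) (hl : l ≠ j) (k : n) : A k l = 0 :=
    congrFun (hA.col_eq_zero_of_diag_eq_zero (by simpa [hl] using hdiag l)) k
  ext k l
  rcases eq_or_ne l j with rfl | hl
  · rcases eq_or_ne k l with rfl | hk
    · simpa [vecMulVec_apply] using hdiag k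
    · rw [← hA.1.apply k l, hcol k hk]
      simp [vecMulVec_apply, hk]
  · simp [vecMulVec_apply, Pi.single_apply, hcol l hl, hl]

theorem IsHermitian.trace_pow_mul {A B : Matrix n n 𝕜} (hA : A.IsHermitian) (hB : B.IsHermitian)
    (k : ℕ) : (A ^ k * B).trace = ∑ i, ((RCLike.re
      ((star (hA.eigenvectorUnitary : Matrix n n 𝕜) * B * hA.eigenvectorUnitary) i i) *
        hA.eigenvalues i ^ k : ℝ) : 𝕜) := by
  have hre (i : n) := congrFun
    (isHermitian_conjTranspose_mul_mul (hA.eigenvectorUnitary : Matrix n n 𝕜) hB).coe_re_diag i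
  conv_lhs => rw [hA.spectral_theorem, ← map_pow, diagonal_pow, Unitary.conjStarAlgAut_apply,
    Matrix.mul_assoc, Matrix.mul_assoc, trace_mul_comm, Matrix.mul_assoc]
  simp only [trace, diag_apply, diagonal_mul, Function.comp_apply, Pi.pow_apply,
    star_eq_conjTranspose] at hre ⊢
  refine Finset.sum_congr rfl fun i _ => ?_
  rw [RCLike.ofReal_mul, hre, RCLike.ofReal_pow, mul_comm]

end Matrix

theorem stmt3 (n : ℕ) (ρ M : Matrix (Fin (n + 1)) (Fin (n + 1)) ℂ)
    (hρ : ρ.PosSemidef) (hρtr : ρ.trace = 1) (hM : M.PosSemidef)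
    (hspec : Function.Injective hM.1.eigenvalues)
    (heq : (M ^ 2 * ρ).trace = ((M * ρ).trace) ^ 2) :
    ∃ (v : Fin (n + 1) → ℂ) (μ : ℝ),
      (∑ i, Complex.normSq (v i)) = 1 ∧
      M.mulVec v = (μ : ℂ) • v ∧
      ρ = Matrix.vecMulVec v (star v) := by
  set U : Matrix (Fin (n + 1)) (Fin (n + 1)) ℂ := ↑hM.1.eigenvectorUnitary
  set σ := star U * ρ * U
  have hσ : σ.PosSemidef := hρ.conjTranspose_mul_mul_same U
  have htrace (k : ℕ) :
      (M ^ k * ρ).trace = ∑ i, (((σ i i).re * hM.1.eigenvalues i ^ k : ℝ) : ℂ) :=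
    hM.1.trace_pow_mul hρ.1 k
  obtain ⟨j, hj⟩ : ∃ j, (fun i => (σ i i).re) = Pi.single j 1 := by
    refine exists_eq_single_of_sum_mul_sq_eq_sq (fun i => (Complex.nonneg_iff.1 hσ.diag_nonneg).1)
      ?_ hspec ?_
    · have h0 := htrace 0
      simp only [pow_zero, one_mul, mul_one, hρtr] at h0
      exact_mod_cast h0.symm
    · rw [htrace 2, show M * ρ = M ^ 1 * ρ by rw [pow_one], htrace 1] at heq
      simp only [pow_one] at heq
      exact_mod_cast heq
  have hρ_eq : U * σ * star U = ρ := by simp [σ, U, ← Matrix.mul_assoc, Matrix.mul_assoc ρ]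
  refine ⟨hM.1.eigenvectorBasis j, hM.1.eigenvalues j, ?_, ?_, ?_⟩
  · simp [Complex.normSq_eq_norm_sq, ← EuclideanSpace.norm_sq_eq]
  · simp [hM.1.mulVec_eigenvectorBasis]
  · rw [← hρ_eq, hσ.eq_vecMulVec_single_of_re_diag_eq hj, mul_vecMulVec_single_mul_star,
      hM.1.eigenvectorUnitary_col_eq]
end

section
/- Let ρ be a density matrix, M_g, M_e commuting diagonal invertible matrices with M_g² + M_e² = I, ξ = |n⟩⟨n|, p_g = tr(M_g ρ M_g†), p_e = tr(M_e ρ M_e†), and V(ρ) = f(⟨n|ρ|n⟩) with f(x) = (x + x²)/2. Then p_g·V(M_g ρ M_g†/p_g) + p_e·V(M_e ρ M_e†/p_e) − V(ρ) = (p_g p_e ⟨n|ρ|n⟩²/2)·(cos²φ_n/p_g − sin²φ_n/p_e)², where cos²φ_n and sin²φ_n are the n-th diagonal entries of M_g² and M_e² respectively. In particular this quantity is nonnegative, so V is a submartingale function for the QND measurement Markov chain. -/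
open Matrix
open scoped ComplexOrder

/-- One-step drift formula for the submartingale `V(ρ) = f(⟨n|ρ|n⟩)`,
`f(x) = (x + x²)/2`, under the QND measurement Markov chain. -/
theorem stmt6 (nmax : ℕ) (φ₀ ϑ : ℝ)
    (Mg Me : Matrix (Fin (nmax + 1)) (Fin (nmax + 1)) ℂ)
    (hMg : Mg = Matrix.diagonal fun m : Fin (nmax + 1) =>
      (Real.cos (φ₀ + ϑ * (m : ℕ)) : ℂ))
    (hMe : Me = Matrix.diagonal fun m : Fin (nmax + 1) =>
      (Real.sin (φ₀ + ϑ * (m : ℕ)) : ℂ))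
    (hg : IsUnit Mg) (he : IsUnit Me)
    (ρ : Matrix (Fin (nmax + 1)) (Fin (nmax + 1)) ℂ)
    (hρ : ρ.PosSemidef) (hρtr : ρ.trace = 1)
    (f : ℝ → ℝ) (hf : ∀ x, f x = (x + x ^ 2) / 2)
    (n : Fin (nmax + 1)) (φn : ℝ) (hφn : φn = φ₀ + ϑ * (n : ℕ))
    (pg pe : ℝ)
    (hpg : pg = (Mg * ρ * Mgᴴ).trace.re) (hpe : pe = (Me * ρ * Meᴴ).trace.re)
    (hpg0 : 0 < pg) (hpe0 : 0 < pe) :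
    (pg * f ((Mg * ρ * Mgᴴ) n n / pg).re + pe * f ((Me * ρ * Meᴴ) n n / pe).re
        - f (ρ n n).re
      = (pg * pe * ((ρ n n).re) ^ 2 / 2)
        * (Real.cos φn ^ 2 / pg - Real.sin φn ^ 2 / pe) ^ 2)
    ∧ 0 ≤ pg * f ((Mg * ρ * Mgᴴ) n n / pg).re + pe * f ((Me * ρ * Meᴴ) n n / pe).re
        - f (ρ n n).re := by
  -- diagonal entries
  have hent : ∀ (d : Fin (nmax+1) → ℝ) (m : Fin (nmax+1)),
      ((Matrix.diagonal (fun k => (d k : ℂ)) * ρ *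
        (Matrix.diagonal (fun k => (d k : ℂ)))ᴴ) m m) = (d m)^2 * ρ m m := by
    intro d m
    simp [Matrix.diagonal_conjTranspose, Matrix.mul_apply, Matrix.diagonal_apply,
      Finset.sum_ite_eq', Finset.sum_ite_eq]
    push_cast
    ring
  have hgnn : (Mg * ρ * Mgᴴ) n n = ((Real.cos φn : ℂ))^2 * ρ n n := by
    rw [hMg, hφn]; exact hent _ n
  have henn : (Me * ρ * Meᴴ) n n = ((Real.sin φn : ℂ))^2 * ρ n n := by
    rw [hMe, hφn]; exact hent _ n
  -- traces
  have htr : ∀ (d : Fin (nmax+1) → ℝ),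
      (Matrix.diagonal (fun k => (d k : ℂ)) * ρ *
        (Matrix.diagonal (fun k => (d k : ℂ)))ᴴ).trace.re
      = ∑ m, (d m)^2 * (ρ m m).re := by
    intro d
    rw [Matrix.trace, Complex.re_sum]
    refine Finset.sum_congr rfl fun m _ => ?_
    rw [Matrix.diag_apply, hent d m]
    simp [← Complex.ofReal_pow]
  have hpgpe : pg + pe = 1 := by
    rw [hpg, hpe, hMg, hMe, htr, htr, ← Finset.sum_add_distrib]
    have : ∀ m ∈ (Finset.univ : Finset (Fin (nmax+1))),
        Real.cos (φ₀ + ϑ * (m:ℕ))^2 * (ρ m m).re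
        + Real.sin (φ₀ + ϑ * (m:ℕ))^2 * (ρ m m).re = (ρ m m).re := by
      intro m _
      rw [← add_mul, Real.cos_sq_add_sin_sq, one_mul]
    rw [Finset.sum_congr rfl this]
    have : (∑ m, (ρ m m).re) = ρ.trace.re := by
      rw [Matrix.trace, Complex.re_sum]; rfl
    rw [this, hρtr]; simp
  set x : ℝ := (ρ n n).re with hx
  set c : ℝ := Real.cos φn with hc
  set s : ℝ := Real.sin φn with hs
  have hcs : c^2 + s^2 = 1 := Real.cos_sq_add_sin_sq φn
  have hre_g : ((Mg * ρ * Mgᴴ) n n / pg).re = c^2 * x / pg := by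
    rw [hgnn]
    rw [Complex.div_re]
    simp [← Complex.ofReal_pow, Complex.normSq]
    field_simp
    ring
  have hre_e : ((Me * ρ * Meᴴ) n n / pe).re = s^2 * x / pe := by
    rw [henn]
    rw [Complex.div_re]
    simp [← Complex.ofReal_pow, Complex.normSq]
    field_simp
    ring
  have key : pg * f ((Mg * ρ * Mgᴴ) n n / pg).re + pe * f ((Me * ρ * Meᴴ) n n / pe).re
      - f (ρ n n).re
      = (pg * pe * x ^ 2 / 2) * (c ^ 2 / pg - s ^ 2 / pe) ^ 2 := by
    have hs2 : s ^ 2 = 1 - c ^ 2 := by linarith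
    have hpe1 : pe = 1 - pg := by linarith
    rw [hre_g, hre_e, hf, hf, hf, ← hx, hs2, hpe1]
    have h1 : (1:ℝ) - pg ≠ 0 := by rw [← hpe1]; exact hpe0.ne'
    field_simp
    ring
  refine ⟨key, ?_⟩
  rw [key]
  positivity
end

section
/- Let a density matrix ρ satisfy tr(M_g ρ M_g†) = cos²φ_n and ⟨n|ρ|n⟩ > 0, and suppose moreover that tr(M_g·(M_g ρ M_g†/tr(M_g ρ M_g†))·M_g†) = cos²φ_n (invariance under the jump to g). If the spectrum of M_g² is non-degenerate, then ρ = |n⟩⟨n|. -/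
/-!
Put `p i = ρ i i ≥ 0`, a probability vector, and `x i = cos² φ_i`. Since `M_g` is real diagonal,
the two trace conditions say that `x` has mean `x n` and second moment `(x n)²` under `p`, so its
variance vanishes and `p` is concentrated where `x = x n`, i.e. at `n` by non-degeneracy.
A positive semidefinite matrix with a zero diagonal entry vanishes on that row and column.
-/

open Matrix Finset
open scoped ComplexOrder

theorem eq_of_sum_sq_mul_eq_sq {ι : Type*} [Fintype ι] {p x : ι → ℝ} {a : ℝ}
    (hp : ∀ i, 0 ≤ p i) (h0 : ∑ i, p i = 1) (h1 : ∑ i, x i * p i = a)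
    (h2 : ∑ i, x i ^ 2 * p i = a ^ 2) {i : ι} (hi : p i ≠ 0) : x i = a := by
  have hvar : ∑ j, (x j - a) ^ 2 * p j = 0 :=
    calc ∑ j, (x j - a) ^ 2 * p j
        = ∑ j, x j ^ 2 * p j - 2 * a * ∑ j, x j * p j + a ^ 2 * ∑ j, p j := by
          simp only [mul_sum, ← sum_sub_distrib, ← sum_add_distrib]
          exact sum_congr rfl fun j _ => by ring
      _ = 0 := by rw [h0, h1, h2]; ring
  have hterm := (sum_eq_zero_iff_of_nonneg fun j _ => mul_nonneg (sq_nonneg (x j - a)) (hp j)).mp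
    hvar i (mem_univ i)
  simpa [hi, sub_eq_zero] using hterm

namespace Matrix.PosSemidef

variable {ι 𝕜 : Type*} [Fintype ι] [DecidableEq ι] [RCLike 𝕜] {A : Matrix ι ι 𝕜}

theorem apply_eq_zero_of_diag_eq_zero (hA : A.PosSemidef) {i : ι} (hi : A i i = 0) (j : ι) :
    A j i = 0 := by
  have hquad : star (Pi.single i 1) ⬝ᵥ A *ᵥ Pi.single i 1 = 0 := by
    simpa [mulVec_single, dotProduct, Pi.single_apply] using hi
  simpa [mulVec_single] using congrFun ((hA.dotProduct_mulVec_zero_iff _).mp hquad) j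

theorem apply_eq_zero_of_diag_eq_zero' (hA : A.PosSemidef) {i : ι} (hi : A i i = 0) (j : ι) :
    A i j = 0 := by
  rw [← hA.isHermitian.apply, hA.apply_eq_zero_of_diag_eq_zero hi, star_zero]

theorem eq_single_of_diag_eq_zero (hA : A.PosSemidef) (htr : A.trace = 1) (n : ι)
    (h : ∀ i ≠ n, A i i = 0) : A = single n n 1 := by
  have hnn : A n n = 1 := by
    rw [← htr]
    exact (sum_eq_single n (fun i _ hi => h i hi) (by simp)).symm
  ext i j
  by_cases hi : i = n
  · by_cases hj : j = n
    · subst hi hj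
      rw [hnn, single_apply_same]
    · rw [hA.apply_eq_zero_of_diag_eq_zero (h j hj), single_apply_of_col_ne _ _ (Ne.symm hj)]
  · rw [hA.apply_eq_zero_of_diag_eq_zero' (h i hi), single_apply_of_row_ne (Ne.symm hi)]

end Matrix.PosSemidef

section

variable {ι : Type*} [Fintype ι] [DecidableEq ι] (c : ι → ℝ) (A : Matrix ι ι ℂ)

theorem diagonal_ofReal_mul_mul_conjTranspose_apply_self (i : ι) :
    (diagonal (fun i => (c i : ℂ)) * A * (diagonal fun i => (c i : ℂ))ᴴ) i i
      = (c i ^ 2 : ℝ) * A i i := by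
  simp only [diagonal_conjTranspose, mul_diagonal, diagonal_mul, Pi.star_apply, RCLike.star_def,
    Complex.conj_ofReal, Complex.ofReal_pow]
  ring

theorem trace_diagonal_ofReal_mul_mul_conjTranspose :
    (diagonal (fun i => (c i : ℂ)) * A * (diagonal fun i => (c i : ℂ))ᴴ).trace
      = ∑ i, (c i ^ 2 : ℝ) * A i i := by
  simp only [trace, diag_apply, diagonal_ofReal_mul_mul_conjTranspose_apply_self]

end

theorem Matrix.PosSemidef.eq_single_of_trace_conj_diagonal_eq
    {ι : Type*} [Fintype ι] [DecidableEq ι] {ρ M : Matrix ι ι ℂ} {c : ι → ℝ} {n : ι}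
    (hM : M = diagonal fun i => (c i : ℂ)) (hρ : ρ.PosSemidef) (hρtr : ρ.trace = 1)
    (hc : ∀ i j, c i ^ 2 = c j ^ 2 → i = j) (hcn : c n ≠ 0)
    (h1 : (M * ρ * Mᴴ).trace = (c n ^ 2 : ℝ))
    (h2 : (M * ((M * ρ * Mᴴ).trace⁻¹ • (M * ρ * Mᴴ)) * Mᴴ).trace = (c n ^ 2 : ℝ)) :
    ρ = single n n 1 := by
  subst hM
  set p : ι → ℝ := fun i => (ρ i i).re
  have hρp : ∀ i, ρ i i = p i := fun i => Complex.eq_re_of_ofReal_le hρ.diag_nonneg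
  have hT : ((c n ^ 2 : ℝ) : ℂ) ≠ 0 := by exact_mod_cast pow_ne_zero 2 hcn
  rw [Matrix.mul_smul, Matrix.smul_mul, trace_smul, h1, smul_eq_mul, inv_mul_eq_iff_eq_mul₀ hT,
    trace_diagonal_ofReal_mul_mul_conjTranspose] at h2
  rw [trace_diagonal_ofReal_mul_mul_conjTranspose] at h1
  simp only [diagonal_ofReal_mul_mul_conjTranspose_apply_self, hρp, ← mul_assoc, ← sq] at h1 h2
  have h0 : ∑ i, p i = 1 := by
    exact_mod_cast (by simpa [trace, hρp] using hρtr : ∑ i, (p i : ℂ) = 1)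
  have hm1 : ∑ i, c i ^ 2 * p i = c n ^ 2 := by exact_mod_cast h1
  have hm2 : ∑ i, (c i ^ 2) ^ 2 * p i = (c n ^ 2) ^ 2 := by exact_mod_cast h2
  refine hρ.eq_single_of_diag_eq_zero hρtr n fun i hi => ?_
  by_contra hρi
  refine hi (hc i n (eq_of_sum_sq_mul_eq_sq (fun j => ?_) h0 hm1 hm2 (by simpa [hρp] using hρi)))
  simpa [hρp] using hρ.diag_nonneg

theorem stmt8_general (nmax : ℕ) (φ₀ ϑ : ℝ)
    (Mg : Matrix (Fin (nmax + 1)) (Fin (nmax + 1)) ℂ)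
    (hMg : Mg = Matrix.diagonal fun m : Fin (nmax + 1) =>
      (Real.cos (φ₀ + ϑ * (m : ℕ)) : ℂ))
    (hg : IsUnit Mg)
    (hspec : ∀ m m' : Fin (nmax + 1),
      Real.cos (φ₀ + ϑ * (m : ℕ)) ^ 2 = Real.cos (φ₀ + ϑ * (m' : ℕ)) ^ 2 → m = m')
    (ρ : Matrix (Fin (nmax + 1)) (Fin (nmax + 1)) ℂ)
    (hρ : ρ.PosSemidef) (hρtr : ρ.trace = 1)
    (n : Fin (nmax + 1)) (φn : ℝ) (hφn : φn = φ₀ + ϑ * (n : ℕ))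
    (h1 : (Mg * ρ * Mgᴴ).trace = (Real.cos φn ^ 2 : ℝ))
    (h2 : (Mg * (((Mg * ρ * Mgᴴ).trace)⁻¹ • (Mg * ρ * Mgᴴ)) * Mgᴴ).trace
      = (Real.cos φn ^ 2 : ℝ)) :
    ρ = Matrix.single n n 1 := by
  subst hφn
  have hcn : Real.cos (φ₀ + ϑ * (n : ℕ)) ≠ 0 := by
    rw [hMg, isUnit_diagonal] at hg
    exact_mod_cast (hg.apply n).ne_zero
  exact hρ.eq_single_of_trace_conj_diagonal_eq hMg hρtr hspec hcn h1 h2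

/-- Invariance under the jump to `g`, together with `⟨n|ρ|n⟩ > 0`, forces
`ρ = |n⟩⟨n|` when `M_g²` has a non-degenerate spectrum. -/
theorem stmt8 (nmax : ℕ) (φ₀ ϑ : ℝ)
    (Mg : Matrix (Fin (nmax + 1)) (Fin (nmax + 1)) ℂ)
    (hMg : Mg = Matrix.diagonal fun m : Fin (nmax + 1) =>
      (Real.cos (φ₀ + ϑ * (m : ℕ)) : ℂ))
    (hg : IsUnit Mg)
    (hspec : ∀ m m' : Fin (nmax + 1),
      Real.cos (φ₀ + ϑ * (m : ℕ)) ^ 2 = Real.cos (φ₀ + ϑ * (m' : ℕ)) ^ 2 → m = m')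
    (ρ : Matrix (Fin (nmax + 1)) (Fin (nmax + 1)) ℂ)
    (hρ : ρ.PosSemidef) (hρtr : ρ.trace = 1)
    (n : Fin (nmax + 1)) (φn : ℝ) (hφn : φn = φ₀ + ϑ * (n : ℕ))
    (hn : 0 < (ρ n n).re)
    (h1 : (Mg * ρ * Mgᴴ).trace = (Real.cos φn ^ 2 : ℝ))
    (h2 : (Mg * (((Mg * ρ * Mgᴴ).trace)⁻¹ • (Mg * ρ * Mgᴴ)) * Mgᴴ).trace
      = (Real.cos φn ^ 2 : ℝ)) :
    ρ = Matrix.single n n 1 :=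
  stmt8_general nmax φ₀ ϑ Mg hMg hg hspec ρ hρ hρtr n φn hφn h1 h2
end

section
/- Let ψ ∈ ℂ^{n_max+1} be a nonzero vector such that ⟨ψ| D_α |n̄⟩ = 0 for all α ∈ ℂ, where D_α = exp(α a† − α* a) with a the truncated annihilation operator. Then ψ = 0, a contradiction; i.e., the family {D_α|n̄⟩ : α ∈ ℂ} spans ℂ^{n_max+1}. -/
open Matrix

/-!
Differentiating `t ↦ ⟨ψ| exp (t (u a† - ū a)) |n̄⟩` at `t = 0` gives `⟨ψ| (u a† - ū a)^j |n̄⟩ = 0`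
for all `j` and all `|u| = 1`. Conjugation by the phase operator `diag (u^k)` turns `u a† - ū a`
into `Q = a† - a`, so `∑ₘ ψ̄ₘ (Q^j)ₘₙ̄ uᵐ` vanishes on the unit circle and every coefficient
`ψ̄ₘ (Q^j)ₘₙ̄` is zero. As `Q` is tridiagonal with nonzero off-diagonal entries,
`(Q^|m - n̄|)ₘₙ̄ ≠ 0`, hence `ψₘ = 0`.
-/

-- `NormedSpace.exp` depends only on the topology, so any matrix norm can be used to differentiate it.
attribute [local instance] Matrix.linftyOpNormedAddCommGroup Matrix.linftyOpNormedRing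
  Matrix.linftyOpNormedAlgebra

theorem ContinuousLinearMap.apply_pow_eq_zero_of_forall_apply_exp_smul {𝕂 𝔸 E : Type*} [RCLike 𝕂]
    [NormedRing 𝔸] [NormedAlgebra 𝕂 𝔸] [CompleteSpace 𝔸] [NormedAddCommGroup E]
    [NormedSpace 𝕂 E] (L : 𝔸 →L[𝕂] E) (M : 𝔸)
    (h : ∀ t : 𝕂, L (NormedSpace.exp (t • M)) = 0) (j : ℕ) : L (M ^ j) = 0 := by
  suffices key : ∀ (k : ℕ) (t : 𝕂), L (M ^ k * NormedSpace.exp (t • M)) = 0 by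
    simpa using key j 0
  intro k
  induction k with
  | zero => simpa using h
  | succ k ih =>
    intro t
    have hderiv : HasDerivAt (fun s : 𝕂 => L (M ^ k * NormedSpace.exp (s • M)))
        (L (M ^ (k + 1) * NormedSpace.exp (t • M))) t := by
      simpa [Function.comp_def, pow_succ, mul_assoc] using
        (L.comp (ContinuousLinearMap.mul 𝕂 𝔸 (M ^ k))).hasFDerivAt.comp_hasDerivAt t
          (hasDerivAt_exp_smul_const' M t)
    simp only [ih] at hderiv
    exact hderiv.unique (hasDerivAt_const t 0)

theorem eq_zero_of_forall_sum_mul_pow_eq_zero {R : Type*} [CommRing R] [IsDomain R] {n : ℕ}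
    {S : Set R} (hS : S.Infinite) (c : Fin n → R)
    (h : ∀ z ∈ S, ∑ i : Fin n, c i * z ^ (i : ℕ) = 0) : c = 0 := by
  set p : Polynomial R := ∑ i : Fin n, Polynomial.monomial i (c i)
  have hp : p = 0 := p.eq_zero_of_infinite_isRoot <| hS.mono fun z hz => by
    simpa [p, Polynomial.eval_finsetSum] using h z hz
  ext m
  simpa [p, Polynomial.finsetSum_coeff, Polynomial.coeff_monomial, Fin.val_inj] using
    congrArg (Polynomial.coeff · m) hp

theorem Complex.sphere_infinite (x : ℂ) {r : ℝ} (hr : 0 < r) : (Metric.sphere x r).Infinite :=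
  (isPreconnected_sphere (by simp) x r).infinite_of_nontrivial
    ⟨x + r, by simp [hr.le], x - r, by simp [hr.le], fun h => by
      linarith [congrArg Complex.re h, Complex.add_re x r, Complex.sub_re x r, Complex.ofReal_re r]⟩

section Tridiagonal
variable {R : Type*} {n : ℕ} (Q : Matrix (Fin n) (Fin n) R)

theorem pow_apply_eq_zero_of_lt [Semiring R] (hQ : ∀ i l : Fin n, (l : ℕ) + 1 < i → Q i l = 0) :
    ∀ (j : ℕ) (i k : Fin n), (k : ℕ) + j < i → (Q ^ j) i k = 0 := by
  intro j
  induction j with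
  | zero =>
    intro i k h
    rw [pow_zero, one_apply_ne (by omega)]
  | succ j ih =>
    intro i k h
    rw [pow_succ', mul_apply]
    refine Finset.sum_eq_zero fun l _ => ?_
    by_cases hl : (k : ℕ) + j < l
    · rw [ih l k hl, mul_zero]
    · rw [hQ i l (by omega), zero_mul]

theorem pow_apply_ne_zero_of_eq_add [Semiring R] [NoZeroDivisors R] [Nontrivial R]
    (hQ : ∀ i l : Fin n, (l : ℕ) + 1 < i → Q i l = 0)
    (hsub : ∀ i l : Fin n, (i : ℕ) = l + 1 → Q i l ≠ 0) :
    ∀ (j : ℕ) (i k : Fin n), (i : ℕ) = k + j → (Q ^ j) i k ≠ 0 := by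
  intro j
  induction j with
  | zero =>
    intro i k h
    simp [Fin.ext h]
  | succ j ih =>
    intro i k h
    let l₀ : Fin n := ⟨k + j, by omega⟩
    rw [pow_succ', mul_apply, Finset.sum_eq_single l₀]
    · exact mul_ne_zero (hsub i l₀ h) (ih l₀ k rfl)
    · intro l _ hl
      rcases lt_or_gt_of_ne (Fin.val_ne_of_ne hl) with hlt | hgt
      · rw [hQ i l (by simp only [l₀] at hlt; omega), zero_mul]
      · rw [pow_apply_eq_zero_of_lt Q hQ j l k hgt, mul_zero]
    · simp

theorem exists_pow_apply_ne_zero [CommSemiring R] [NoZeroDivisors R] [Nontrivial R]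
    (hlow : ∀ i l : Fin n, (l : ℕ) + 1 < i → Q i l = 0)
    (hup : ∀ i l : Fin n, (i : ℕ) + 1 < l → Q i l = 0)
    (hsub : ∀ i l : Fin n, (i : ℕ) = l + 1 → Q i l ≠ 0)
    (hsup : ∀ i l : Fin n, (l : ℕ) = i + 1 → Q i l ≠ 0) (i k : Fin n) :
    ∃ j, (Q ^ j) i k ≠ 0 := by
  rcases le_total (k : ℕ) i with h | h
  · exact ⟨i - k, pow_apply_ne_zero_of_eq_add Q hlow hsub _ i k (by omega)⟩
  · refine ⟨k - i, ?_⟩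
    have := pow_apply_ne_zero_of_eq_add Qᵀ (fun i l h => hup l i h)
      (fun i l h => hsup l i h) (k - i) k i (by omega)
    rwa [← transpose_pow, transpose_apply] at this

end Tridiagonal

noncomputable def annihilation (n : ℕ) : Matrix (Fin n) (Fin n) ℂ :=
  of fun i j => if (j : ℕ) = (i : ℕ) + 1 then (Real.sqrt (j : ℕ) : ℂ) else 0

section Annihilation
variable {n : ℕ}

theorem annihilation_apply (i j : Fin n) :
    annihilation n i j = if (j : ℕ) = (i : ℕ) + 1 then (Real.sqrt (j : ℕ) : ℂ) else 0 := rfl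

theorem conjTranspose_annihilation_apply (i j : Fin n) :
    (annihilation n)ᴴ i j = if (i : ℕ) = (j : ℕ) + 1 then (Real.sqrt (i : ℕ) : ℂ) else 0 := by
  rw [conjTranspose_apply, annihilation_apply]
  split_ifs <;> simp

theorem annihilation_mul_diagonal_pow (u : ℂ) :
    annihilation n * diagonal (fun k : Fin n => u ^ (k : ℕ)) =
      u • (diagonal (fun k : Fin n => u ^ (k : ℕ)) * annihilation n) := by
  ext i j
  simp only [mul_diagonal, diagonal_mul, Matrix.smul_apply, annihilation_apply]
  split_ifs with h
  · rw [h, pow_succ]; ring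
  · simp

theorem diagonal_pow_mul_conjTranspose_annihilation (u : ℂ) :
    diagonal (fun k : Fin n => u ^ (k : ℕ)) * (annihilation n)ᴴ =
      u • ((annihilation n)ᴴ * diagonal (fun k : Fin n => u ^ (k : ℕ))) := by
  ext i j
  simp only [mul_diagonal, diagonal_mul, Matrix.smul_apply, conjTranspose_annihilation_apply]
  split_ifs with h
  · rw [h, pow_succ]; ring
  · simp

theorem semiconjBy_diagonal_pow_conjTranspose_sub_annihilation {u : ℂ} (hu : ‖u‖ = 1) :
    SemiconjBy (diagonal fun k : Fin n => u ^ (k : ℕ)) ((annihilation n)ᴴ - annihilation n)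
      (u • (annihilation n)ᴴ - starRingEnd ℂ u • annihilation n) := by
  have hu' : starRingEnd ℂ u * u = 1 := by simp [Complex.conj_mul', hu]
  rw [SemiconjBy, mul_sub, sub_mul, diagonal_pow_mul_conjTranspose_annihilation, smul_mul_assoc,
    smul_mul_assoc, annihilation_mul_diagonal_pow, smul_smul, hu', one_smul]

theorem conjTranspose_sub_annihilation_apply (i l : Fin n) :
    ((annihilation n)ᴴ - annihilation n) i l =
      (if (i : ℕ) = (l : ℕ) + 1 then (Real.sqrt (i : ℕ) : ℂ) else 0) -
        if (l : ℕ) = (i : ℕ) + 1 then (Real.sqrt (l : ℕ) : ℂ) else 0 := by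
  rw [Matrix.sub_apply, conjTranspose_annihilation_apply, annihilation_apply]

theorem exists_pow_conjTranspose_sub_annihilation_apply_ne_zero (i k : Fin n) :
    ∃ j, (((annihilation n)ᴴ - annihilation n) ^ j) i k ≠ 0 := by
  have hsqrt : ∀ m : ℕ, 0 < m → (Real.sqrt m : ℂ) ≠ 0 := fun m hm => by
    simpa using Nat.pos_iff_ne_zero.mp hm
  refine exists_pow_apply_ne_zero _ ?_ ?_ ?_ ?_ i k <;> intro i l h <;>
    rw [conjTranspose_sub_annihilation_apply]
  · rw [if_neg (by omega), if_neg (by omega), sub_zero]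
  · rw [if_neg (by omega), if_neg (by omega), sub_zero]
  · rw [if_pos h, if_neg (by omega), sub_zero]; exact hsqrt _ (by omega)
  · rw [if_neg (by omega), if_pos h, zero_sub, neg_ne_zero]; exact hsqrt _ (by omega)

end Annihilation

theorem dotProduct_pow_mulVec_eq_zero_of_forall_exp {ι : Type*} [Fintype ι] [DecidableEq ι]
    (A : Matrix ι ι ℂ) (x v : ι → ℂ)
    (h : ∀ α : ℂ, x ⬝ᵥ NormedSpace.exp (α • Aᴴ - starRingEnd ℂ α • A) *ᵥ v = 0) (u : ℂ) (j : ℕ) :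
    x ⬝ᵥ (u • Aᴴ - starRingEnd ℂ u • A) ^ j *ᵥ v = 0 := by
  let L : Matrix ι ι ℂ →L[ℝ] ℂ := LinearMap.toContinuousLinearMap
    { toFun := fun X => x ⬝ᵥ X *ᵥ v
      map_add' := fun X Y => by simp [add_mulVec, dotProduct_add]
      map_smul' := fun r X => by simp [smul_mulVec, dotProduct_smul] }
  refine L.apply_pow_eq_zero_of_forall_apply_exp_smul _ (fun t => ?_) j
  have hline : t • (u • Aᴴ - starRingEnd ℂ u • A) =
      ((t : ℂ) * u) • Aᴴ - starRingEnd ℂ ((t : ℂ) * u) • A := by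
    simp [smul_sub, mul_smul, Complex.coe_smul]
  change x ⬝ᵥ NormedSpace.exp (t • (u • Aᴴ - starRingEnd ℂ u • A)) *ᵥ v = 0
  rw [hline]
  exact h _

theorem mul_pow_conjTranspose_sub_annihilation_apply_eq_zero {n : ℕ} (x : Fin n → ℂ) (k : Fin n)
    (h : ∀ (u : ℂ) (j : ℕ),
      x ⬝ᵥ (u • (annihilation n)ᴴ - starRingEnd ℂ u • annihilation n) ^ j *ᵥ Pi.single k 1 = 0)
    (j : ℕ) (m : Fin n) : x m * (((annihilation n)ᴴ - annihilation n) ^ j) m k = 0 := by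
  set Q := (annihilation n)ᴴ - annihilation n
  suffices hc : (fun m => x m * (Q ^ j) m k) = 0 from congrFun hc m
  refine eq_zero_of_forall_sum_mul_pow_eq_zero (Complex.sphere_infinite 0 one_pos) _ fun u hu => ?_
  set M := u • (annihilation n)ᴴ - starRingEnd ℂ u • annihilation n
  have hconj : (diagonal fun k : Fin n => u ^ (k : ℕ)) * Q ^ j =
      M ^ j * diagonal fun k : Fin n => u ^ (k : ℕ) :=
    (semiconjBy_diagonal_pow_conjTranspose_sub_annihilation (by simpa using hu)).pow_right j
  calc ∑ i, x i * (Q ^ j) i k * u ^ (i : ℕ)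
      = ∑ i, x i * ((diagonal fun k : Fin n => u ^ (k : ℕ)) * Q ^ j) i k := by
        simp only [diagonal_mul]
        exact Finset.sum_congr rfl fun i _ => by ring
    _ = (x ⬝ᵥ M ^ j *ᵥ Pi.single k 1) * u ^ (k : ℕ) := by
        simp only [hconj, mul_diagonal, mulVec_single_one, dotProduct, col_apply, Finset.sum_mul,
          mul_assoc]
    _ = 0 := by rw [h, zero_mul]

/-- If a vector `ψ` is orthogonal to `D_α|n̄⟩` for every `α ∈ ℂ`, then `ψ = 0`;
hence a nonzero such `ψ` is contradictory, i.e. the family `{D_α|n̄⟩}` spans. -/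
theorem stmt16 (nmax : ℕ) (nbar : Fin (nmax + 1))
    (a : Matrix (Fin (nmax + 1)) (Fin (nmax + 1)) ℂ)
    (ha : ∀ i j : Fin (nmax + 1),
      a i j = if (j : ℕ) = (i : ℕ) + 1 then (Real.sqrt (j : ℕ) : ℂ) else 0)
    (D : ℂ → Matrix (Fin (nmax + 1)) (Fin (nmax + 1)) ℂ)
    (hD : ∀ α : ℂ, D α = NormedSpace.exp (α • aᴴ - (starRingEnd ℂ α) • a))
    (ψ : Fin (nmax + 1) → ℂ) (hψ : ψ ≠ 0)
    (horth : ∀ α : ℂ,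
      star ψ ⬝ᵥ (D α).mulVec (Pi.single nbar (1 : ℂ)) = 0) :
    False := by
  obtain rfl : a = annihilation (nmax + 1) := Matrix.ext ha
  have hpow := dotProduct_pow_mulVec_eq_zero_of_forall_exp _ (star ψ) _
    fun α => hD α ▸ horth α
  apply hψ
  ext m
  obtain ⟨j, hj⟩ := exists_pow_conjTranspose_sub_annihilation_apply_ne_zero m nbar
  simpa [hj] using mul_pow_conjTranspose_sub_annihilation_apply_eq_zero _ nbar hpow j m
end
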